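/- Let (Ω, 𝔽, ℙ) be a probability space, K a finite set of integers, and (ξ_k)_{k∈K} independent random variables each with standard normal distribution N(0,1). Define X_K(t) = Σ_{k∈K} ξ_k · H(t − 2k). Then for all reals 0 ≤ s < t: 𝔼[(X_K(t) − X_K(s))²] ≥ Σ_{k∈K : s/2 < k ≤ t/2} H(t − 2k)² ≥ (9/16) · Σ_{k∈K : s/2 < k ≤ t/2 − 1} (t − 2k)^{-1}. -/

import Mathlib

open MeasureTheory ProbabilityTheory

/-- The unscaled integrated Haar function. -/
noncomputable def H (t : ℝ) : ℝ :=
  (max (t - 2) 0) ^ ((3 : ℝ) / 2) - 2 * (max (t - 1) 0) ^ ((3 : ℝ) / 2)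
    + (max t 0) ^ ((3 : ℝ) / 2)

open Real in
lemma haar_aux_pdf_eq :
    gaussianPDFReal 0 1 = fun x => (Real.sqrt (2*π))⁻¹ * Real.exp (-(1/2) * x^2) := by
  funext x
  simp [gaussianPDFReal]
  norm_num
  left
  ring

lemma haar_aux_integral_eq (g : ℝ → ℝ) :
    ∫ x, g x ∂(gaussianReal 0 1) = ∫ x, gaussianPDFReal 0 1 x * g x := by
  rw [gaussianReal_of_var_ne_zero _ one_ne_zero]
  have h : (gaussianPDF 0 1)
      = fun x => ((Real.toNNReal (gaussianPDFReal 0 1 x) : NNReal) : ENNReal) := rfl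
  rw [h, integral_withDensity_eq_integral_smul ((measurable_gaussianPDFReal 0 1).real_toNNReal) g]
  refine integral_congr_ae (ae_of_all _ fun x => ?_)
  simp [NNReal.smul_def, Real.coe_toNNReal _ (gaussianPDFReal_nonneg 0 1 x)]

lemma haar_aux_integrable_iff (g : ℝ → ℝ) :
    Integrable g (gaussianReal 0 1) ↔
      Integrable (fun x => gaussianPDFReal 0 1 x * g x) volume := by
  rw [gaussianReal_of_var_ne_zero _ one_ne_zero]
  have h : (gaussianPDF 0 1)
      = fun x => ((Real.toNNReal (gaussianPDFReal 0 1 x) : NNReal) : ENNReal) := rfl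
  rw [h, integrable_withDensity_iff_integrable_smul
    ((measurable_gaussianPDFReal 0 1).real_toNNReal)]
  apply integrable_congr
  refine ae_of_all _ fun x => ?_
  simp [NNReal.smul_def, Real.coe_toNNReal _ (gaussianPDFReal_nonneg 0 1 x)]

lemma haar_aux_rpow_two_eq {x : ℝ} : x ^ (2:ℝ) = x ^ 2 := by
  rw [show (2:ℝ) = ((2:ℕ):ℝ) by norm_num, Real.rpow_natCast]

open Real in
lemma haar_aux_integrable_sq_exp :
    Integrable (fun x : ℝ => x ^ 2 * Real.exp (-(1/2) * x^2)) volume := by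
  have base : Integrable (fun x : ℝ => x ^ (2:ℝ) * Real.exp (-(1/2) * x^2)) volume :=
    integrable_rpow_mul_exp_neg_mul_sq (by norm_num) (by norm_num)
  have he : (fun x : ℝ => x ^ (2:ℝ) * Real.exp (-(1/2) * x^2))
      = fun x : ℝ => x ^ 2 * Real.exp (-(1/2) * x^2) := by
    funext x; rw [haar_aux_rpow_two_eq]
  rwa [he] at base

open Real in
lemma haar_aux_integrable_pdf_sq :
    Integrable (fun x => gaussianPDFReal 0 1 x * x ^ 2) volume := by
  have h1 := haar_aux_integrable_sq_exp.const_mul ((Real.sqrt (2*π))⁻¹)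
  have he : (fun x : ℝ => (Real.sqrt (2*π))⁻¹ * (x ^ 2 * Real.exp (-(1/2) * x^2)))
      = fun x => gaussianPDFReal 0 1 x * x ^ 2 := by
    funext x; rw [haar_aux_pdf_eq]; ring
  rwa [he] at h1

open Real in
lemma haar_aux_gaussian_mean : ∫ x, x ∂(gaussianReal 0 1) = 0 := by
  rw [haar_aux_integral_eq]
  set f : ℝ → ℝ := fun x => gaussianPDFReal 0 1 x * x with hf
  have h1 : ∫ x, f (-x) = ∫ x, f x := integral_neg_eq_self f volume
  have h2 : ∀ x, f (-x) = - f x := by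
    intro x
    simp only [hf, haar_aux_pdf_eq]
    rw [neg_sq]
    ring
  have h3 : ∫ x, f (-x) = - ∫ x, f x := by
    simp_rw [h2]; exact integral_neg f
  have h4 : ∫ x, f x = 0 := by rw [h1] at h3; linarith
  exact h4

lemma haar_aux_rpow_three_halves {y : ℝ} (hy : 0 ≤ y) :
    y ^ ((3:ℝ)/2) = Real.sqrt y ^ 3 := by
  rw [show (3:ℝ)/2 = (1/2 : ℝ) * 3 by norm_num, Real.rpow_mul hy, ← Real.sqrt_eq_rpow,
    ← Real.rpow_natCast (Real.sqrt y) 3]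
  norm_num

open Real in
lemma haar_aux_gaussian_sq : ∫ x, x ^ 2 ∂(gaussianReal 0 1) = 1 := by
  rw [haar_aux_integral_eq]
  set g : ℝ → ℝ := fun x => x ^ 2 * Real.exp (-(1/2) * x^2) with hg
  have hint : Integrable g volume := haar_aux_integrable_sq_exp
  have hIoi : ∫ x in Set.Ioi (0:ℝ), g x
      = ((1:ℝ)/2) ^ (-((2:ℝ)+1)/2) * (1/2) * Real.Gamma (((2:ℝ)+1)/2) := by
    rw [← integral_rpow_mul_exp_neg_mul_rpow (by norm_num : (0:ℝ) < 2)
      (by norm_num : (-1:ℝ) < 2) (by norm_num : (0:ℝ) < 1/2)]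
    refine setIntegral_congr_fun measurableSet_Ioi fun x hx => ?_
    simp only [hg]
    norm_num [Real.rpow_natCast]
  have hGamma : Real.Gamma (((2:ℝ)+1)/2) = Real.sqrt π / 2 := by
    rw [show ((2:ℝ)+1)/2 = 1/2 + 1 by norm_num, Real.Gamma_add_one (by norm_num),
      Real.Gamma_one_half_eq]
    ring
  have hpow : ((1:ℝ)/2) ^ (-((2:ℝ)+1)/2) = 2 * Real.sqrt 2 := by
    rw [one_div, Real.inv_rpow (by norm_num : (0:ℝ) ≤ 2),
      ← Real.rpow_neg (by norm_num : (0:ℝ) ≤ 2),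
      show -(-((2:ℝ)+1)/2) = (3:ℝ)/2 by norm_num,
      haar_aux_rpow_three_halves (by norm_num : (0:ℝ) ≤ 2)]
    have h2 : Real.sqrt 2 ^ 2 = 2 := Real.sq_sqrt (by norm_num)
    nlinarith [Real.sqrt_nonneg 2]
  have heven : ∫ x in Set.Iic (0:ℝ), g x = ∫ x in Set.Ioi (0:ℝ), g x := by
    have h := integral_comp_neg_Ioi (c := (0:ℝ)) g
    rw [neg_zero] at h
    rw [← h]
    refine setIntegral_congr_fun measurableSet_Ioi fun x _ => ?_
    simp only [hg, neg_sq]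
  have hsplit : (∫ x in Set.Iic (0:ℝ), g x) + ∫ x in Set.Ioi (0:ℝ), g x = ∫ x, g x :=
    intervalIntegral.integral_Iic_add_Ioi hint.integrableOn hint.integrableOn
  have htot : ∫ x, g x = Real.sqrt 2 * Real.sqrt π := by
    rw [← hsplit, heven, hIoi, hGamma, hpow]
    ring
  have he : (fun x => gaussianPDFReal 0 1 x * x ^ 2)
      = fun x => (Real.sqrt (2*π))⁻¹ * g x := by
    funext x; rw [haar_aux_pdf_eq]; simp only [hg]; ring
  rw [he, integral_const_mul, htot, Real.sqrt_mul (by norm_num : (0:ℝ) ≤ 2)]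
  have hπ : Real.sqrt π ≠ 0 := ne_of_gt (Real.sqrt_pos.2 Real.pi_pos)
  have h2 : Real.sqrt 2 ≠ 0 := ne_of_gt (Real.sqrt_pos.2 (by norm_num))
  field_simp

lemma haar_aux_memL2_gauss : MemLp (id : ℝ → ℝ) 2 (gaussianReal 0 1) := by
  rw [memLp_two_iff_integrable_sq aestronglyMeasurable_id]
  have h : (fun x : ℝ => id x ^ 2) = fun x : ℝ => x ^ 2 := rfl
  rw [h, haar_aux_integrable_iff]
  exact haar_aux_integrable_pdf_sq

lemma haar_aux_H_of_nonpos {x : ℝ} (hx : x ≤ 0) : H x = 0 := by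
  unfold H
  rw [max_eq_right (by linarith), max_eq_right (by linarith), max_eq_right hx,
    Real.zero_rpow (by norm_num)]
  ring

set_option maxHeartbeats 1600000 in
lemma haar_aux_H_sq_bound {x : ℝ} (hx : 2 ≤ x) : (9/16) * x⁻¹ ≤ H x ^ 2 := by
  have h0 : (0:ℝ) ≤ x - 2 := by linarith
  have h1 : (0:ℝ) ≤ x - 1 := by linarith
  have h2 : (0:ℝ) ≤ x := by linarith
  set a := Real.sqrt (x - 2) with hadef
  set b := Real.sqrt (x - 1) with hbdef
  set c := Real.sqrt x with hcdef
  have ha2 : a ^ 2 = x - 2 := Real.sq_sqrt h0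
  have hb2 : b ^ 2 = x - 1 := Real.sq_sqrt h1
  have hc2 : c ^ 2 = x := Real.sq_sqrt h2
  have ha : 0 ≤ a := Real.sqrt_nonneg _
  have hb : 0 ≤ b := Real.sqrt_nonneg _
  have hc : 0 < c := Real.sqrt_pos.2 (by linarith)
  have hu : c ^ 2 = b ^ 2 + 1 := by rw [hb2, hc2]; ring
  have hv : b ^ 2 = a ^ 2 + 1 := by rw [ha2, hb2]; ring
  have hH : H x = a ^ 3 - 2 * b ^ 3 + c ^ 3 := by
    unfold H
    rw [max_eq_left h0, max_eq_left h1, max_eq_left h2,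
      haar_aux_rpow_three_halves h0, haar_aux_rpow_three_halves h1,
      haar_aux_rpow_three_halves h2]
  have hid : (a ^ 3 - 2 * b ^ 3 + c ^ 3) * ((c+a)*(c+b)*(a+b)) = 2*(a*b + b*c + c*a) := by
    linear_combination (b*c + b*c^3 + b^2 + b^2*c^2 + b^3*c - b^4 + a*c + a*c^3 + 2*a*b
      + 2*a*b*c^2 + 2*a*b^2*c + a^2 + a^2*c^2 + a^2*b*c + a^2*b^2 + a^3*b + a^4) * hu
      + (b*c - b^2 - b^3*c - b^4 + a*c - 2*a*b^2*c - 2*a*b^3 - a^2 - 2*a^2*b*c - 2*a^2*b^2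
      - a^3*c - a^3*b) * hv
  have hkey2 : 3 * ((c+a)*(c+b)*(a+b)) ≤ 8 * c * (a*b + b*c + c*a) := by
    nlinarith [sq_nonneg (a-b), sq_nonneg (b-c), sq_nonneg (a-c), sq_nonneg (a+b-2*c),
      mul_nonneg ha hb, mul_nonneg (mul_nonneg ha hb) hc.le, mul_pos hc hc,
      sq_nonneg (a*b-c^2), sq_nonneg (a+b), mul_nonneg ha hc.le, mul_nonneg hb hc.le]
  have hdenom : 0 < (c+a)*(c+b)*(a+b) := by
    have hbpos : 0 < b := by nlinarith
    positivity
  have h8 : ((a ^ 3 - 2 * b ^ 3 + c ^ 3) * (4*c)) * ((c+a)*(c+b)*(a+b))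
      = 8 * c * (a*b + b*c + c*a) := by linear_combination (4*c) * hid
  have h4 : 3 ≤ (a ^ 3 - 2 * b ^ 3 + c ^ 3) * (4*c) :=
    le_of_mul_le_mul_right (by rw [h8]; linarith [hkey2]) hdenom
  have hHge : 3 / (4 * c) ≤ H x := by
    rw [hH, div_le_iff₀ (by positivity)]
    linarith
  have hpos : (0:ℝ) < 3 / (4 * c) := by positivity
  have hsq : (3 / (4 * c)) ^ 2 ≤ H x ^ 2 := pow_le_pow_left₀ hpos.le hHge 2
  calc (9/16) * x⁻¹ = (3 / (4*c))^2 := by rw [div_pow, mul_pow, hc2]; ring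
    _ ≤ H x ^ 2 := hsq
/-- Lower bound for the natural distance of the process `X_K(t) = ∑_{k∈K} ξ_k H(t-2k)`:
for `0 ≤ s < t`,
`𝔼 (X_K(t) - X_K(s))² ≥ ∑_{k∈K, s/2 < k ≤ t/2} H(t-2k)²
  ≥ (9/16) ∑_{k∈K, s/2 < k ≤ t/2 - 1} (t-2k)⁻¹`. -/
theorem haar_critical_stmt8
    {Ω : Type*} [MeasurableSpace Ω] (P : Measure Ω) [IsProbabilityMeasure P]
    (K : Finset ℤ) (ξ : ℤ → Ω → ℝ)
    (hindep : iIndepFun (fun k : K => ξ k) P)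
    (hgauss : ∀ k ∈ K, Measure.map (ξ k) P = gaussianReal 0 1)
    (X : ℝ → Ω → ℝ) (hX : ∀ t ω, X t ω = ∑ k ∈ K, ξ k ω * H (t - 2 * k))
    (s t : ℝ) (hs : 0 ≤ s) (hst : s < t) :
    (∑ k ∈ K.filter (fun k : ℤ => s / 2 < (k : ℝ) ∧ (k : ℝ) ≤ t / 2), H (t - 2 * k) ^ 2 ≤
        ∫ ω, (X t ω - X s ω) ^ 2 ∂P) ∧
    ((9 / 16) * ∑ k ∈ K.filter (fun k : ℤ => s / 2 < (k : ℝ) ∧ (k : ℝ) ≤ t / 2 - 1),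
        (t - 2 * k)⁻¹ ≤
      ∑ k ∈ K.filter (fun k : ℤ => s / 2 < (k : ℝ) ∧ (k : ℝ) ≤ t / 2), H (t - 2 * k) ^ 2) := by
  classical
  -- measurability and moments of the ξ k
  have hmeas : ∀ k ∈ K, AEMeasurable (ξ k) P := by
    intro k hk
    by_contra h
    have h0 := hgauss k hk
    rw [Measure.map_of_not_aemeasurable h] at h0
    have h1 : (gaussianReal 0 1) Set.univ = 1 := measure_univ
    rw [← h0] at h1
    simp at h1
  have hmem : ∀ k ∈ K, MemLp (ξ k) 2 P := by
    intro k hk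
    have h2 : MemLp (id : ℝ → ℝ) 2 (Measure.map (ξ k) P) := by
      rw [hgauss k hk]; exact haar_aux_memL2_gauss
    rw [memLp_map_measure_iff aestronglyMeasurable_id (hmeas k hk)] at h2
    simpa [Function.comp] using h2
  have hint1 : ∀ k ∈ K, Integrable (ξ k) P := fun k hk => (hmem k hk).integrable one_le_two
  have hmean : ∀ k ∈ K, ∫ ω, ξ k ω ∂P = 0 := by
    intro k hk
    have h1 : ∫ x, x ∂(Measure.map (ξ k) P) = ∫ ω, ξ k ω ∂P :=
      integral_map (hmeas k hk) aestronglyMeasurable_id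
    rw [← h1, hgauss k hk]
    exact haar_aux_gaussian_mean
  have hsqm : ∀ k ∈ K, ∫ ω, ξ k ω ^ 2 ∂P = 1 := by
    intro k hk
    have h1 : ∫ x, x ^ 2 ∂(Measure.map (ξ k) P) = ∫ ω, ξ k ω ^ 2 ∂P :=
      integral_map (hmeas k hk) (measurable_id.pow_const 2).aestronglyMeasurable
    rw [← h1, hgauss k hk]
    exact haar_aux_gaussian_sq
  have hindep' : ∀ j ∈ K, ∀ k ∈ K, j ≠ k → IndepFun (ξ j) (ξ k) P := by
    intro j hj k hk hjk
    exact hindep.indepFun (i := ⟨j, hj⟩) (j := ⟨k, hk⟩) (by simp [Subtype.ext_iff, hjk])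
  have hprod : ∀ j ∈ K, ∀ k ∈ K, ∫ ω, ξ j ω * ξ k ω ∂P = if j = k then 1 else 0 := by
    intro j hj k hk
    by_cases h : j = k
    · subst h
      rw [if_pos rfl]
      simpa [pow_two] using hsqm j hj
    · rw [if_neg h]
      have h1 := (hindep' j hj k hk h).integral_mul_eq_mul_integral (hint1 j hj).1 (hint1 k hk).1
      have h2 : ∫ ω, ξ j ω * ξ k ω ∂P = ∫ ω, (ξ j * ξ k) ω ∂P := rfl
      rw [h2, h1, hmean j hj, hmean k hk, mul_zero]
  have hintmul : ∀ j ∈ K, ∀ k ∈ K, Integrable (fun ω => ξ j ω * ξ k ω) P := by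
    intro j hj k hk
    by_cases h : j = k
    · subst h
      simpa [pow_two] using (hmem j hj).integrable_sq
    · exact (hindep' j hj k hk h).integrable_mul (hint1 j hj) (hint1 k hk)
  set a : ℤ → ℝ := fun k => H (t - 2 * k) - H (s - 2 * k) with ha_def
  have hXdiff : ∀ ω, X t ω - X s ω = ∑ k ∈ K, a k * ξ k ω := by
    intro ω
    rw [hX, hX, ← Finset.sum_sub_distrib]
    exact Finset.sum_congr rfl fun k _ => by simp only [ha_def]; ring
  have hE : ∫ ω, (X t ω - X s ω) ^ 2 ∂P = ∑ k ∈ K, a k ^ 2 := by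
    have step1 : ∫ ω, (X t ω - X s ω) ^ 2 ∂P
        = ∫ ω, ∑ j ∈ K, ∑ k ∈ K, (a j * a k) * (ξ j ω * ξ k ω) ∂P := by
      refine integral_congr_ae (ae_of_all _ fun ω => ?_)
      show (X t ω - X s ω) ^ 2 = ∑ j ∈ K, ∑ k ∈ K, (a j * a k) * (ξ j ω * ξ k ω)
      rw [hXdiff, pow_two, Finset.sum_mul_sum]
      exact Finset.sum_congr rfl fun j _ => Finset.sum_congr rfl fun k _ => by ring
    have step2 : ∫ ω, ∑ j ∈ K, ∑ k ∈ K, (a j * a k) * (ξ j ω * ξ k ω) ∂P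
        = ∑ j ∈ K, ∑ k ∈ K, (a j * a k) * ∫ ω, ξ j ω * ξ k ω ∂P := by
      rw [integral_finset_sum _ (fun j hj =>
        integrable_finset_sum _ (fun k hk => (hintmul j hj k hk).const_mul _))]
      refine Finset.sum_congr rfl fun j hj => ?_
      rw [integral_finset_sum _ (fun k hk => (hintmul j hj k hk).const_mul _)]
      exact Finset.sum_congr rfl fun k hk => integral_const_mul _ _
    have step3 : ∑ j ∈ K, ∑ k ∈ K, (a j * a k) * ∫ ω, ξ j ω * ξ k ω ∂P
        = ∑ j ∈ K, a j ^ 2 := by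
      refine Finset.sum_congr rfl fun j hj => ?_
      rw [Finset.sum_eq_single_of_mem j hj]
      · rw [hprod j hj j hj, if_pos rfl, mul_one, pow_two]
      · intro k hk hkj
        rw [hprod j hj k hk, if_neg (fun hh => hkj hh.symm), mul_zero]
    rw [step1, step2, step3]
  refine ⟨?_, ?_⟩
  · -- first inequality
    rw [hE]
    have heq : ∀ k ∈ K.filter (fun k : ℤ => s / 2 < (k : ℝ) ∧ (k : ℝ) ≤ t / 2),
        H (t - 2 * k) ^ 2 = a k ^ 2 := by
      intro k hk
      rcases Finset.mem_filter.1 hk with ⟨-, hk1, -⟩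
      have hH0 : H (s - 2 * (k:ℝ)) = 0 := haar_aux_H_of_nonpos (by linarith)
      simp only [ha_def, hH0, sub_zero]
    rw [Finset.sum_congr rfl heq]
    exact Finset.sum_le_sum_of_subset_of_nonneg (Finset.filter_subset _ _)
      (fun k _ _ => sq_nonneg _)
  · -- second inequality
    rw [Finset.mul_sum]
    have hsub : K.filter (fun k : ℤ => s / 2 < (k : ℝ) ∧ (k : ℝ) ≤ t / 2 - 1)
        ⊆ K.filter (fun k : ℤ => s / 2 < (k : ℝ) ∧ (k : ℝ) ≤ t / 2) := by
      intro k hk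
      rcases Finset.mem_filter.1 hk with ⟨hkK, hk1, hk2⟩
      exact Finset.mem_filter.2 ⟨hkK, hk1, by linarith⟩
    calc ∑ k ∈ K.filter (fun k : ℤ => s / 2 < (k : ℝ) ∧ (k : ℝ) ≤ t / 2 - 1),
          (9:ℝ)/16 * (t - 2 * k)⁻¹
        ≤ ∑ k ∈ K.filter (fun k : ℤ => s / 2 < (k : ℝ) ∧ (k : ℝ) ≤ t / 2 - 1),
          H (t - 2 * k) ^ 2 := by
          refine Finset.sum_le_sum fun k hk => ?_
          rcases Finset.mem_filter.1 hk with ⟨-, -, hk2⟩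
          exact haar_aux_H_sq_bound (by linarith)
      _ ≤ ∑ k ∈ K.filter (fun k : ℤ => s / 2 < (k : ℝ) ∧ (k : ℝ) ≤ t / 2),
          H (t - 2 * k) ^ 2 :=
          Finset.sum_le_sum_of_subset_of_nonneg hsub (fun k _ _ => sq_nonneg _)
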